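/- arXiv:1601.04485 — 3 statements merged into one kernel-verified Lean document; each statement's English description precedes it below -/
import Mathlib

section
/- Let M̃ be an n×n skew-symmetric real matrix and 𝟙 the all-ones matrix. Then M* = (M̃·𝟙 + 𝟙·M̃)/n is a TDOA matrix, i.e., there exists x with 1̂ᵀx = 0 such that M* = x·1̂ᵀ − 1̂·xᵀ, and moreover x = M̃·1̂. -/
open Matrix

noncomputable def onehat (n : ℕ) : Fin n → ℝ := fun _ => (Real.sqrt n)⁻¹

def ones (n : ℕ) : Matrix (Fin n) (Fin n) ℝ := Matrix.of fun _ _ => 1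

theorem denoised_is_tdoa (n : ℕ) (hn : 0 < n) (Mt : Matrix (Fin n) (Fin n) ℝ)
    (hMt : Mtᵀ = -Mt)
    (Mstar : Matrix (Fin n) (Fin n) ℝ)
    (hMstar : Mstar = (n : ℝ)⁻¹ • (Mt * ones n + ones n * Mt)) :
    ∃ x : Fin n → ℝ, onehat n ⬝ᵥ x = 0 ∧
      Mstar = vecMulVec x (onehat n) - vecMulVec (onehat n) x ∧
      x = Mt.mulVec (onehat n) := by
  have hskew : ∀ i j, Mt j i = - Mt i j := by
    intro i j
    have := congrFun (congrFun hMt i) j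
    simpa using this
  have hs : (Real.sqrt n)⁻¹ * (Real.sqrt n)⁻¹ = (n : ℝ)⁻¹ := by
    rw [← mul_inv, Real.mul_self_sqrt (by positivity)]
  have hsumsum : ∑ i, ∑ k, Mt i k = 0 := by
    have h1 : ∑ i, ∑ k, Mt i k = ∑ i, ∑ k, Mt k i := Finset.sum_comm
    have h2 : ∑ i, ∑ k, Mt k i = -∑ i, ∑ k, Mt i k := by
      rw [← Finset.sum_neg_distrib]
      refine Finset.sum_congr rfl fun i _ => ?_
      rw [← Finset.sum_neg_distrib]
      exact Finset.sum_congr rfl fun k _ => hskew i k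
    linarith [h1, h2]
  refine ⟨Mt.mulVec (onehat n), ?_, ?_, rfl⟩
  · simp only [dotProduct, mulVec, onehat]
    calc ∑ i, (Real.sqrt n)⁻¹ * ∑ k, Mt i k * (Real.sqrt n)⁻¹
        = (Real.sqrt n)⁻¹ * (Real.sqrt n)⁻¹ * ∑ i, ∑ k, Mt i k := by
          rw [Finset.mul_sum]
          refine Finset.sum_congr rfl fun i _ => ?_
          rw [← Finset.sum_mul, ← mul_assoc, mul_comm ((Real.sqrt n)⁻¹) _, mul_assoc]; ring
      _ = 0 := by rw [hsumsum]; ring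
  · ext i j
    have hcol : ∑ k, Mt k j = -∑ k, Mt j k := by
      rw [← Finset.sum_neg_distrib]
      exact Finset.sum_congr rfl fun k _ => hskew j k
    simp only [hMstar, Matrix.smul_apply, Matrix.add_apply, mul_apply, ones,
      Matrix.of_apply, Matrix.sub_apply, vecMulVec_apply, mulVec, dotProduct, onehat,
      smul_eq_mul, mul_one, one_mul]
    rw [hcol, ← Finset.sum_mul, ← Finset.sum_mul]
    have hs' : (Real.sqrt n)⁻¹ ^ 2 = (n : ℝ)⁻¹ := by rw [sq, hs]
    ring_nf
    rw [hs']
    ring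
end

section
/- Let M̃ be an n×n skew-symmetric real matrix. The minimizer over x ∈ ℝⁿ with 1̂ᵀx = 0 of the Frobenius norm ‖M̃ − (x·1̂ᵀ − 1̂·xᵀ)‖_F² is x* = M̃·1̂, and this minimizer is unique. -/
open Matrix Finset

noncomputable def phi (n : ℕ) (z : Fin n → ℝ) : Matrix (Fin n) (Fin n) ℝ :=
  vecMulVec z (onehat n) - vecMulVec (onehat n) z

noncomputable def frobSq {n : ℕ} (A : Matrix (Fin n) (Fin n) ℝ) : ℝ :=
  Matrix.trace (A * Aᵀ)

lemma frobSq_eq {n : ℕ} (A : Matrix (Fin n) (Fin n) ℝ) :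
    frobSq A = ∑ i, ∑ j, A i j ^ 2 := by
  simp [frobSq, Matrix.trace, Matrix.mul_apply, Matrix.diag, sq]

lemma key_expand (n : ℕ) (hn : 0 < n) (Mt : Matrix (Fin n) (Fin n) ℝ)
    (hMt : Mtᵀ = -Mt) (x : Fin n → ℝ) (hx : onehat n ⬝ᵥ x = 0) :
    frobSq (Mt - phi n x)
      = frobSq Mt - 4 * (x ⬝ᵥ Mt.mulVec (onehat n)) + 2 * (x ⬝ᵥ x) := by
  set c : ℝ := (Real.sqrt n)⁻¹ with hc
  have hn' : (0 : ℝ) < n := by exact_mod_cast hn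
  have hcpos : 0 < c := inv_pos.mpr (Real.sqrt_pos.mpr hn')
  have hc2 : c * c * n = 1 := by
    rw [hc, ← mul_inv, Real.mul_self_sqrt hn'.le]
    exact inv_mul_cancel₀ hn'.ne'
  have hsum : ∑ i, x i = 0 := by
    have h : c * ∑ i, x i = 0 := by
      rw [Finset.mul_sum]; simpa [onehat, dotProduct, hc] using hx
    exact (mul_eq_zero.mp h).resolve_left hcpos.ne'
  have hskew : ∀ i j, Mt j i = - Mt i j := by
    intro i j
    have h := congrFun (congrFun hMt j) i
    simp [Matrix.transpose_apply] at h
    linarith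
  have hdot1 : x ⬝ᵥ Mt.mulVec (onehat n) = c * ∑ i, x i * ∑ j, Mt i j := by
    simp only [dotProduct, Matrix.mulVec, onehat, ← hc, Finset.mul_sum]
    exact Finset.sum_congr rfl fun i _ =>
      Finset.sum_congr rfl fun j _ => by ring
  have hent : ∀ i j, (Mt - phi n x) i j = Mt i j - (x i * c - c * x j) := by
    intro i j
    simp [phi, vecMulVec, onehat, ← hc, Matrix.sub_apply]
  have inner : ∀ i, ∑ j, (Mt i j - (x i * c - c * x j)) ^ 2
      = (∑ j, Mt i j ^ 2) - 2*c*x i*(∑ j, Mt i j) + 2*c*(∑ j, Mt i j * x j)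
        + x i ^ 2 + c*c*(∑ j, x j * x j) := by
    intro i
    have e1 : ∑ j, (Mt i j - (x i * c - c * x j)) ^ 2
        = ∑ j, (Mt i j ^ 2 - 2*c*x i*Mt i j + 2*c*(Mt i j * x j)
            + c*c*(x i ^ 2) - 2*c*c*x i*x j + c*c*(x j * x j)) :=
      Finset.sum_congr rfl fun j _ => by ring
    rw [e1]
    simp only [Finset.sum_add_distrib, Finset.sum_sub_distrib, ← Finset.mul_sum,
      Finset.sum_const, Finset.card_univ, Fintype.card_fin, nsmul_eq_mul, hsum,
      mul_zero]
    linear_combination (x i ^ 2) * hc2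
  have hS2 : ∑ i, ∑ j, Mt i j * x j = - ∑ i, x i * ∑ j, Mt i j := by
    rw [Finset.sum_comm]
    have : ∀ j, ∑ i, Mt i j * x j = -(x j * ∑ i, Mt j i) := by
      intro j
      rw [Finset.mul_sum, ← Finset.sum_neg_distrib]
      exact Finset.sum_congr rfl fun i _ => by rw [hskew j i]; ring
    rw [Finset.sum_congr rfl fun j _ => this j, Finset.sum_neg_distrib]
  have e2 : frobSq (Mt - phi n x)
      = (∑ i, ∑ j, Mt i j ^ 2) - 2*c*(∑ i, x i * ∑ j, Mt i j)
        + 2*c*(∑ i, ∑ j, Mt i j * x j) + (∑ i, x i ^ 2)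
        + (n : ℝ)*(c*c*(∑ j, x j * x j)) := by
    rw [frobSq_eq]
    simp only [hent]
    rw [Finset.sum_congr rfl fun i _ => inner i]
    rw [Finset.sum_add_distrib, Finset.sum_add_distrib, Finset.sum_add_distrib,
      Finset.sum_sub_distrib, Finset.sum_const, Finset.card_univ,
      Fintype.card_fin, nsmul_eq_mul]
    rw [show (∑ i, 2*c*x i*(∑ j, Mt i j)) = 2*c*(∑ i, x i * ∑ j, Mt i j) from by
      rw [Finset.mul_sum]; exact Finset.sum_congr rfl fun i _ => by ring]
    rw [← Finset.mul_sum]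
  rw [e2, hS2, frobSq_eq, hdot1]
  have hsq : ∑ i, x i ^ 2 = x ⬝ᵥ x := by simp [dotProduct, sq]
  have hsq2 : ∑ j, x j * x j = x ⬝ᵥ x := rfl
  rw [hsq, hsq2]
  linear_combination (x ⬝ᵥ x) * hc2

lemma dot_sub_sq {n : ℕ} (x y : Fin n → ℝ) :
    x ⬝ᵥ x - 2 * (x ⬝ᵥ y) + y ⬝ᵥ y = ∑ i, (x i - y i) ^ 2 := by
  simp only [dotProduct, Finset.mul_sum, ← Finset.sum_sub_distrib,
    ← Finset.sum_add_distrib]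
  exact Finset.sum_congr rfl fun i _ => by ring

theorem denoising_minimizer (n : ℕ) (hn : 0 < n) (Mt : Matrix (Fin n) (Fin n) ℝ)
    (hMt : Mtᵀ = -Mt) :
    (onehat n ⬝ᵥ Mt.mulVec (onehat n) = 0) ∧
    (∀ x : Fin n → ℝ, onehat n ⬝ᵥ x = 0 →
      frobSq (Mt - phi n (Mt.mulVec (onehat n))) ≤ frobSq (Mt - phi n x)) ∧
    (∀ x : Fin n → ℝ, onehat n ⬝ᵥ x = 0 →
      frobSq (Mt - phi n x) = frobSq (Mt - phi n (Mt.mulVec (onehat n))) →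
      x = Mt.mulVec (onehat n)) := by
  have h1 : onehat n ⬝ᵥ Mt.mulVec (onehat n) = 0 := by
    have h := Matrix.dotProduct_mulVec (onehat n) Mt (onehat n)
    rw [← Matrix.mulVec_transpose, hMt] at h
    simp only [Matrix.neg_mulVec, neg_dotProduct, dotProduct_neg,
      dotProduct_comm] at h
    linarith [h]
  set xs : Fin n → ℝ := Mt.mulVec (onehat n) with hxs
  have hxstar : onehat n ⬝ᵥ xs = 0 := h1
  have hdiff : ∀ x : Fin n → ℝ, onehat n ⬝ᵥ x = 0 →
      frobSq (Mt - phi n x) - frobSq (Mt - phi n xs) = 2 * ∑ i, (x i - xs i) ^ 2 := by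
    intro x hx
    rw [key_expand n hn Mt hMt x hx, key_expand n hn Mt hMt xs hxstar,
      ← dot_sub_sq x xs]
    have hx_xs : x ⬝ᵥ xs = x ⬝ᵥ Mt.mulVec (onehat n) := rfl
    have hxs_xs : xs ⬝ᵥ Mt.mulVec (onehat n) = xs ⬝ᵥ xs := rfl
    rw [hx_xs, hxs_xs]
    ring
  refine ⟨h1, fun x hx => ?_, fun x hx heq => ?_⟩
  · have h := hdiff x hx
    have hpos : 0 ≤ ∑ i, (x i - xs i) ^ 2 :=
      Finset.sum_nonneg fun i _ => sq_nonneg _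
    linarith
  · have h := hdiff x hx
    rw [heq] at h
    have hz : ∑ i, (x i - xs i) ^ 2 = 0 := by linarith
    have := (Finset.sum_eq_zero_iff_of_nonneg fun i _ => sq_nonneg (x i - xs i)).mp hz
    funext i
    have hi := this i (Finset.mem_univ i)
    have := pow_eq_zero_iff (n := 2) (by norm_num) |>.mp hi
    linarith [sub_eq_zero.mp this]
end

section
/- The map M̃ ↦ (M̃·𝟙 + 𝟙·M̃)/n is idempotent on skew-symmetric matrices: applying it twice gives the same result as applying it once. In particular, if M̃ is already a TDOA matrix (M̃ = x·1̂ᵀ − 1̂·xᵀ with 1̂ᵀx = 0), then (M̃·𝟙 + 𝟙·M̃)/n = M̃. -/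
open Matrix

noncomputable def denoise (n : ℕ) (M : Matrix (Fin n) (Fin n) ℝ) :
    Matrix (Fin n) (Fin n) ℝ := (n : ℝ)⁻¹ • (M * ones n + ones n * M)

/-!
Since `𝟙 / n = 1̂ 1̂ᵀ =: P` is an orthogonal projection, the map is `M ↦ M P + P M`. Applying it
twice gives `M P + P M + 2 P M P`, and `P M P = (1̂ᵀ M 1̂) P` vanishes for skew-symmetric `M`.
For `T = x 1̂ᵀ - 1̂ xᵀ` with `1̂ᵀ x = 0` one has `T P = x 1̂ᵀ` and `P T = -1̂ xᵀ`.
-/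

section RankOneProjection

variable {ι R : Type*} [Fintype ι] [CommRing R]

theorem dotProduct_mulVec_self_eq_zero_of_transpose_eq_neg [IsAddTorsionFree R]
    {M : Matrix ι ι R} (hM : Mᵀ = -M) (u : ι → R) : u ⬝ᵥ M *ᵥ u = 0 := by
  rw [← self_eq_neg]
  calc u ⬝ᵥ M *ᵥ u = u ⬝ᵥ Mᵀ *ᵥ u := by
        rw [mulVec_transpose, dotProduct_mulVec, dotProduct_comm]
    _ = -(u ⬝ᵥ M *ᵥ u) := by rw [hM, neg_mulVec, dotProduct_neg]

theorem vecMulVec_self_mul_vecMulVec_self {u : ι → R} (hu : u ⬝ᵥ u = 1) :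
    vecMulVec u u * vecMulVec u u = vecMulVec u u := by
  rw [vecMulVec_mul_vecMulVec, hu, one_smul]

theorem vecMulVec_self_mul_mul_vecMulVec_self (u : ι → R) (M : Matrix ι ι R) :
    vecMulVec u u * M * vecMulVec u u = (u ⬝ᵥ M *ᵥ u) • vecMulVec u u := by
  rw [vecMulVec_mul, vecMulVec_mul_vecMulVec, ← dotProduct_mulVec, vecMulVec_smul]

def anticommProj (u : ι → R) (M : Matrix ι ι R) : Matrix ι ι R :=
  M * vecMulVec u u + vecMulVec u u * M

theorem anticommProj_anticommProj {u : ι → R} (hu : u ⬝ᵥ u = 1) (M : Matrix ι ι R) :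
    anticommProj u (anticommProj u M) =
      anticommProj u M + (2 * (u ⬝ᵥ M *ᵥ u)) • vecMulVec u u := by
  have hP := vecMulVec_self_mul_vecMulVec_self hu
  rw [anticommProj, anticommProj, add_mul, mul_add, Matrix.mul_assoc M, hP,
    ← Matrix.mul_assoc _ M, ← Matrix.mul_assoc _ _ M, hP,
    vecMulVec_self_mul_mul_vecMulVec_self, two_mul, add_smul]
  abel

theorem anticommProj_idempotent_of_transpose_eq_neg [IsAddTorsionFree R] {u : ι → R}
    (hu : u ⬝ᵥ u = 1) {M : Matrix ι ι R} (hM : Mᵀ = -M) :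
    anticommProj u (anticommProj u M) = anticommProj u M := by
  rw [anticommProj_anticommProj hu, dotProduct_mulVec_self_eq_zero_of_transpose_eq_neg hM,
    mul_zero, zero_smul, add_zero]

theorem anticommProj_vecMulVec_sub_vecMulVec {u x : ι → R} (hu : u ⬝ᵥ u = 1)
    (hx : u ⬝ᵥ x = 0) :
    anticommProj u (vecMulVec x u - vecMulVec u x) = vecMulVec x u - vecMulVec u x := by
  have hx' : x ⬝ᵥ u = 0 := by rw [dotProduct_comm, hx]
  simp only [anticommProj, sub_mul, mul_sub, vecMulVec_mul_vecMulVec, hu, hx, hx', one_smul,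
    zero_smul, vecMulVec_zero, sub_zero, zero_sub]
  abel

end RankOneProjection

theorem inv_natCast_smul_ones (n : ℕ) :
    (n : ℝ)⁻¹ • ones n = vecMulVec (onehat n) (onehat n) := by
  ext i j
  simp [ones, onehat, vecMulVec_apply, ← mul_inv, Real.mul_self_sqrt (Nat.cast_nonneg n)]

theorem onehat_dotProduct_self {n : ℕ} (hn : 0 < n) : onehat n ⬝ᵥ onehat n = 1 := by
  simp [onehat, dotProduct, ← mul_inv, Real.mul_self_sqrt (Nat.cast_nonneg n), hn.ne']

theorem denoise_eq_anticommProj (n : ℕ) (M : Matrix (Fin n) (Fin n) ℝ) :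
    denoise n M = anticommProj (onehat n) M := by
  rw [denoise, anticommProj, smul_add, ← Matrix.mul_smul, ← Matrix.smul_mul,
    inv_natCast_smul_ones]

theorem denoise_idempotent (n : ℕ) (hn : 0 < n) :
    (∀ Mt : Matrix (Fin n) (Fin n) ℝ, Mtᵀ = -Mt →
      denoise n (denoise n Mt) = denoise n Mt) ∧
    (∀ (x : Fin n → ℝ), onehat n ⬝ᵥ x = 0 →
      denoise n (vecMulVec x (onehat n) - vecMulVec (onehat n) x) =
        vecMulVec x (onehat n) - vecMulVec (onehat n) x) := by
  have hu := onehat_dotProduct_self hn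
  simp only [denoise_eq_anticommProj]
  exact ⟨fun _ hM => anticommProj_idempotent_of_transpose_eq_neg hu hM,
    fun _ hx => anticommProj_vecMulVec_sub_vecMulVec hu hx⟩
end
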